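/- An R-module E is injective if and only if for every injective R-linear map f : A → B between R-modules with card(A), card(B) ≤ κ and every R-homomorphism g : A → E, there is an R-homomorphism h : B → E such that h ∘ f = g. -/
import Mathlib


universe u

/-- `E` is injective: every homomorphism `g : A → E` extends along every
injective linear map `f : A → B`. -/
def ModuleInjective (R : Type u) [Ring R] (E : Type u) [AddCommGroup E] [Module R E] : Prop :=
  ∀ (A B : Type u) [AddCommGroup A] [Module R A] [AddCommGroup B] [Module R B]
    (f : A →ₗ[R] B), Function.Injective f →
    ∀ g : A →ₗ[R] E, ∃ h : B →ₗ[R] E, h.comp f = g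

theorem stmt11 (R : Type u) [Ring R] (E : Type u) [AddCommGroup E] [Module R E] :
    ModuleInjective R E ↔
      ∀ (A B : Type u) [AddCommGroup A] [Module R A] [AddCommGroup B] [Module R B]
        (f : A →ₗ[R] B), Function.Injective f →
        Cardinal.mk A ≤ max (Cardinal.mk R) Cardinal.aleph0 →
        Cardinal.mk B ≤ max (Cardinal.mk R) Cardinal.aleph0 →
        ∀ g : A →ₗ[R] E, ∃ h : B →ₗ[R] E, h.comp f = g := by
  constructor
  · intro h A B _ _ _ _ f hf _ _ g
    exact h A B f hf g
  · intro h
    have baer : Module.Baer R E := by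
      intro I g
      obtain ⟨h', hh'⟩ := h (↥I) R I.subtype Subtype.val_injective
        (le_trans (Cardinal.mk_le_of_injective Subtype.val_injective) (le_max_left _ _)) (le_max_left _ _) g
      exact ⟨h', fun x mx => DFunLike.congr_fun hh' ⟨x, mx⟩⟩
    have inj := baer.injective
    intro A B _ _ _ _ f hf g
    obtain ⟨h', hh'⟩ := inj.out f hf g
    exact ⟨h', LinearMap.ext hh'⟩
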